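/- arXiv:1905.03160 — 2 statements merged into one kernel-verified Lean document; each statement's English description precedes it below -/
import Mathlib

section
/- Let K ≥ 1, let μ ∈ ℝ, let h be a standard complex Gaussian vector in ℂ^K, and set Q = I_K − (μ/‖h‖²) h h^H. Then E[Q] = ν I_K, where ν = 1 − μ/K and the expectation is entrywise. -/
open MeasureTheory ProbabilityTheory Matrix

noncomputable section

/-- `h : Ω → ℂ^K` is a standard complex Gaussian vector `CN(0, I_K)`:
its `K` entries are independent, and each entry has independent real and imaginary
parts distributed as real Gaussians `N(0, 1/2)`. -/
structure IsStdCGaussian {Ω : Type} [MeasureSpace Ω] {K : ℕ} (h : Ω → Fin K → ℂ) : Prop where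
  meas : Measurable h
  indepCoords : iIndepFun (fun k ω => h ω k) ℙ
  indepReIm : ∀ k, IndepFun (fun ω => (h ω k).re) (fun ω => (h ω k).im) ℙ
  lawRe : ∀ k, Measure.map (fun ω => (h ω k).re) ℙ = gaussianReal 0 (1/2)
  lawIm : ∀ k, Measure.map (fun ω => (h ω k).im) ℙ = gaussianReal 0 (1/2)

/-- `‖h‖²` for `h ∈ ℂ^K`. -/
def normSqVec {K : ℕ} (h : Fin K → ℂ) : ℝ := ∑ k, Complex.normSq (h k)

/-- The coordinate-descent update matrix `Q = I_K − (μ/‖h‖²) h hᴴ` associated with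
step parameter `μ ∈ ℝ` and channel vector `h ∈ ℂ^K`. -/
def Qmat {K : ℕ} (μ : ℝ) (h : Fin K → ℂ) : Matrix (Fin K) (Fin K) ℂ :=
  (1 : Matrix (Fin K) (Fin K) ℂ) -
    (((μ / normSqVec h : ℝ) : ℂ)) • Matrix.vecMulVec h (fun k => (starRingEnd ℂ) (h k))

/-!
Write `P x = x xᴴ / ‖x‖²` (`rankOneProj x`), so that `Qmat μ x = 1 - μ • P x`. The law of `h`
is the product of `K` copies of a law on `ℂ` that is invariant under `z ↦ -z` and has no atoms.
Flipping the sign of the `i`-th coordinate preserves this law and negates `P x i j` for `j ≠ i`,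
so `E[P h i j] = 0`; swapping two coordinates preserves it too, so all `E[P h i i]` agree; and
`tr (P h) = 1` almost surely, so each of them is `1 / K`.
-/

lemma MeasureTheory.MeasurePreserving.integral_comp_of_aestronglyMeasurable {α β E : Type*}
    [MeasurableSpace α] [MeasurableSpace β] [NormedAddCommGroup E] [NormedSpace ℝ E]
    {μ : Measure α} {ν : Measure β} {T : α → β} (hT : MeasurePreserving T μ ν) {f : β → E}
    (hf : AEStronglyMeasurable f ν) : ∫ x, f (T x) ∂μ = ∫ y, f y ∂ν := by
  rw [← hT.map_eq] at hf ⊢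
  exact (integral_map hT.aemeasurable hf).symm

lemma integral_eq_zero_of_comp_eq_neg {α E : Type*} [MeasurableSpace α] [NormedAddCommGroup E]
    [NormedSpace ℝ E] {μ : Measure α} {T : α → α} (hT : MeasurePreserving T μ μ) {f : α → E}
    (hf : AEStronglyMeasurable f μ) (hfT : ∀ x, f (T x) = -f x) : ∫ x, f x ∂μ = 0 := by
  have hinv := hT.integral_comp_of_aestronglyMeasurable hf
  simp only [hfT, integral_neg] at hinv
  have htwice : (2 : ℝ) • ∫ x, f x ∂μ = 0 := by
    rw [two_smul]
    nth_rw 1 [← hinv]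
    exact neg_add_cancel _
  exact (smul_eq_zero.mp htwice).resolve_left two_ne_zero

section Projection

variable {K : ℕ}

lemma normSq_le_normSqVec (x : Fin K → ℂ) (k : Fin K) : Complex.normSq (x k) ≤ normSqVec x :=
  Finset.single_le_sum (fun k _ => Complex.normSq_nonneg (x k)) (Finset.mem_univ k)

lemma normSqVec_nonneg (x : Fin K → ℂ) : 0 ≤ normSqVec x :=
  Finset.sum_nonneg fun k _ => Complex.normSq_nonneg (x k)

lemma normSqVec_eq_zero_iff {x : Fin K → ℂ} : normSqVec x = 0 ↔ x = 0 := by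
  simp [normSqVec, Finset.sum_eq_zero_iff_of_nonneg, Complex.normSq_nonneg, funext_iff]

lemma normSqVec_comp_perm (x : Fin K → ℂ) (σ : Equiv.Perm (Fin K)) :
    normSqVec (x ∘ σ) = normSqVec x :=
  Equiv.sum_comp σ fun k => Complex.normSq (x k)

lemma measurable_normSqVec : Measurable (normSqVec : (Fin K → ℂ) → ℝ) := by
  unfold normSqVec
  fun_prop

/-- The orthogonal projection `x xᴴ / ‖x‖²` onto the line spanned by `x` (zero for `x = 0`). -/
def rankOneProj (x : Fin K → ℂ) : Matrix (Fin K) (Fin K) ℂ :=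
  (((normSqVec x)⁻¹ : ℝ) : ℂ) • vecMulVec x (fun k => starRingEnd ℂ (x k))

lemma rankOneProj_apply (x : Fin K → ℂ) (i j : Fin K) :
    rankOneProj x i j = (((normSqVec x)⁻¹ : ℝ) : ℂ) * (x i * starRingEnd ℂ (x j)) := rfl

lemma Qmat_eq_one_sub_smul_rankOneProj (μ : ℝ) (x : Fin K → ℂ) :
    Qmat μ x = 1 - (μ : ℂ) • rankOneProj x := by
  rw [Qmat, rankOneProj, smul_smul, div_eq_mul_inv, Complex.ofReal_mul]

lemma measurable_rankOneProj_apply (i j : Fin K) :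
    Measurable fun x : Fin K → ℂ => rankOneProj x i j := by
  simp only [rankOneProj_apply]
  have := measurable_normSqVec (K := K)
  fun_prop

lemma norm_rankOneProj_apply_le_one (x : Fin K → ℂ) (i j : Fin K) : ‖rankOneProj x i j‖ ≤ 1 := by
  have hi := normSq_le_normSqVec x i
  have hj := normSq_le_normSqVec x j
  rw [← Complex.sq_norm] at hi hj
  rw [rankOneProj_apply, norm_mul, norm_mul, RCLike.norm_conj, Complex.norm_real,
    Real.norm_of_nonneg (inv_nonneg.2 (normSqVec_nonneg x))]
  exact inv_mul_le_one_of_le₀ (by nlinarith [sq_nonneg (‖x i‖ - ‖x j‖)]) (normSqVec_nonneg x)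

lemma trace_rankOneProj {x : Fin K → ℂ} (hx : x ≠ 0) : (rankOneProj x).trace = 1 := by
  have hS : normSqVec x ≠ 0 := normSqVec_eq_zero_iff.not.2 hx
  rw [rankOneProj, trace_smul, trace_vecMulVec]
  simp only [dotProduct, Complex.mul_conj]
  rw [← Complex.ofReal_sum, smul_eq_mul, ← Complex.ofReal_mul, ← normSqVec, inv_mul_cancel₀ hS,
    Complex.ofReal_one]

lemma rankOneProj_apply_comp_swap (x : Fin K → ℂ) (i j : Fin K) :
    rankOneProj (x ∘ Equiv.swap i j) i i = rankOneProj x j j := by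
  simp [rankOneProj_apply, normSqVec_comp_perm]

lemma rankOneProj_apply_neg_coord {i j : Fin K} (hij : i ≠ j) (x : Fin K → ℂ) :
    rankOneProj (fun k => if k = i then -x k else x k) i j = -rankOneProj x i j := by
  have hS : normSqVec (fun k => if k = i then -x k else x k) = normSqVec x :=
    Finset.sum_congr rfl fun k _ => by dsimp only; split_ifs <;> simp
  rw [rankOneProj_apply, rankOneProj_apply, hS, if_pos rfl, if_neg hij.symm]
  ring

lemma integrable_rankOneProj_apply (μ : Measure (Fin K → ℂ)) [IsFiniteMeasure μ] (i j : Fin K) :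
    Integrable (fun x => rankOneProj x i j) μ :=
  .of_bound (measurable_rankOneProj_apply i j).aestronglyMeasurable 1
    (.of_forall fun x => norm_rankOneProj_apply_le_one x i j)

end Projection

section Symmetric

variable {K : ℕ} (ν : Measure ℂ) [IsProbabilityMeasure ν]

lemma integral_rankOneProj_apply_of_ne (hν : MeasurePreserving Neg.neg ν ν) {i j : Fin K}
    (hij : i ≠ j) : ∫ x, rankOneProj x i j ∂(Measure.pi fun _ => ν) = 0 := by
  have hT : MeasurePreserving (fun (x : Fin K → ℂ) k => if k = i then -x k else x k)
      (Measure.pi fun _ => ν) (Measure.pi fun _ => ν) :=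
    measurePreserving_pi _ _ (f := fun k z => if k = i then -z else z) fun k => by
      by_cases hk : k = i
      · simpa [hk] using hν
      · simp only [hk, if_false]
        exact MeasurePreserving.id ν
  exact integral_eq_zero_of_comp_eq_neg hT
    (measurable_rankOneProj_apply i j).aestronglyMeasurable (rankOneProj_apply_neg_coord hij)

lemma integral_rankOneProj_apply_self_eq (i j : Fin K) :
    ∫ x, rankOneProj x i i ∂(Measure.pi fun _ => ν)
      = ∫ x, rankOneProj x j j ∂(Measure.pi fun _ => ν) := by
  have hσ : MeasurePreserving (fun x : Fin K → ℂ => x ∘ Equiv.swap i j)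
      (Measure.pi fun _ => ν) (Measure.pi fun _ => ν) := by
    convert measurePreserving_arrowCongr' (fun _ => ν) (fun _ => ν) (Equiv.swap i j)
      (MeasurableEquiv.refl ℂ) fun _ => MeasurePreserving.id ν using 1
    funext x k
    simp [MeasurableEquiv.arrowCongr', Equiv.arrowCongr', Equiv.arrowCongr, Equiv.symm_swap]
  simp only [← rankOneProj_apply_comp_swap _ i j]
  exact (hσ.integral_comp_of_aestronglyMeasurable
    (measurable_rankOneProj_apply i i).aestronglyMeasurable).symm

lemma integral_trace_rankOneProj [NeZero K] [NullSingletonClass ν] :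
    ∫ x : Fin K → ℂ, (rankOneProj x).trace ∂(Measure.pi fun _ => ν) = 1 := by
  have hae : ∀ᵐ x : Fin K → ℂ ∂(Measure.pi fun _ => ν), (rankOneProj x).trace = 1 := by
    filter_upwards [Measure.ae_ne _ 0] with x hx using trace_rankOneProj hx
  simp [integral_congr_ae hae]

lemma integral_rankOneProj_apply_self [NeZero K] [NullSingletonClass ν] (i : Fin K) :
    ∫ x, rankOneProj x i i ∂(Measure.pi fun _ => ν) = (K : ℂ)⁻¹ := by
  have hsum : ∑ j : Fin K, ∫ x, rankOneProj x j j ∂(Measure.pi fun _ => ν) = 1 := by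
    rw [← integral_finsetSum _ fun j _ => integrable_rankOneProj_apply _ j j]
    exact integral_trace_rankOneProj ν
  simp only [integral_rankOneProj_apply_self_eq ν _ i, Finset.sum_const, Finset.card_univ,
    Fintype.card_fin, nsmul_eq_mul] at hsum
  exact eq_inv_of_mul_eq_one_right hsum

lemma integral_rankOneProj [NeZero K] [NullSingletonClass ν]
    (hν : MeasurePreserving Neg.neg ν ν) :
    Matrix.of (fun i j => ∫ x, rankOneProj x i j ∂(Measure.pi fun _ => ν))
      = (K : ℂ)⁻¹ • (1 : Matrix (Fin K) (Fin K) ℂ) := by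
  ext i j
  rcases eq_or_ne i j with rfl | hij
  · simp [integral_rankOneProj_apply_self]
  · simp [integral_rankOneProj_apply_of_ne ν hν hij, hij]

end Symmetric

/-- The law `CN(0, 1)` on `ℂ`: real and imaginary parts are independent `N(0, 1/2)`. -/
def stdComplexGaussian : Measure ℂ :=
  ((gaussianReal 0 (1/2)).prod (gaussianReal 0 (1/2))).map Complex.measurableEquivRealProd.symm

instance : IsProbabilityMeasure stdComplexGaussian :=
  Measure.isProbabilityMeasure_map Complex.measurableEquivRealProd.symm.measurable.aemeasurable

instance : NullSingletonClass stdComplexGaussian where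
  measure_singleton z := by
    have : NullSingletonClass (gaussianReal 0 (1/2)) :=
      nullSingletonClass_gaussianReal (by norm_num)
    rw [stdComplexGaussian, MeasurableEquiv.map_apply, MeasurableEquiv.preimage_symm,
      Set.image_singleton, measure_singleton]

lemma measurePreserving_neg_stdComplexGaussian :
    MeasurePreserving Neg.neg stdComplexGaussian stdComplexGaussian := by
  have hG : MeasurePreserving Neg.neg (gaussianReal 0 (1/2)) (gaussianReal 0 (1/2)) :=
    ⟨measurable_neg, by simpa using gaussianReal_map_neg (μ := 0) (v := 1/2)⟩
  have hcomm : Neg.neg ∘ Complex.measurableEquivRealProd.symm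
      = Complex.measurableEquivRealProd.symm ∘ Prod.map Neg.neg Neg.neg := by
    funext p
    apply Complex.ext <;> simp [Complex.measurableEquivRealProd_symm_apply]
  refine ⟨measurable_neg, ?_⟩
  rw [stdComplexGaussian, Measure.map_map measurable_neg
    Complex.measurableEquivRealProd.symm.measurable, hcomm, ← Measure.map_map
    Complex.measurableEquivRealProd.symm.measurable (measurable_neg.prodMap measurable_neg),
    (hG.prod hG).map_eq]

namespace IsStdCGaussian

variable {Ω : Type} [MeasureSpace Ω] {K : ℕ} {h : Ω → Fin K → ℂ}

lemma measurable_apply (hg : IsStdCGaussian h) (k : Fin K) : Measurable fun ω => h ω k :=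
  (measurable_pi_apply k).comp hg.meas

lemma map_apply_eq [IsFiniteMeasure (ℙ : Measure Ω)] (hg : IsStdCGaussian h) (k : Fin K) :
    (ℙ : Measure Ω).map (fun ω => h ω k) = stdComplexGaussian := by
  have hre : Measurable fun ω => (h ω k).re := Complex.measurable_re.comp (hg.measurable_apply k)
  have him : Measurable fun ω => (h ω k).im := Complex.measurable_im.comp (hg.measurable_apply k)
  have hpair : (ℙ : Measure Ω).map (fun ω => ((h ω k).re, (h ω k).im))
      = (gaussianReal 0 (1/2)).prod (gaussianReal 0 (1/2)) := by
    rw [(indepFun_iff_map_prod_eq_prod_map_map hre.aemeasurable him.aemeasurable).mp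
      (hg.indepReIm k), hg.lawRe k, hg.lawIm k]
  rw [stdComplexGaussian, ← hpair,
    Measure.map_map Complex.measurableEquivRealProd.symm.measurable (hre.prodMk him)]
  rfl

lemma map_eq_pi [IsProbabilityMeasure (ℙ : Measure Ω)] (hg : IsStdCGaussian h) :
    (ℙ : Measure Ω).map h = Measure.pi fun _ => stdComplexGaussian := by
  rw [← funext hg.map_apply_eq]
  exact hg.indepCoords.map_fun_eq_pi_map fun k => (hg.measurable_apply k).aemeasurable

end IsStdCGaussian

lemma measurable_Qmat_apply {K : ℕ} (μ : ℝ) (i j : Fin K) :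
    Measurable fun x : Fin K → ℂ => Qmat μ x i j := by
  simp only [Qmat_eq_one_sub_smul_rankOneProj, Matrix.sub_apply, Matrix.smul_apply, smul_eq_mul]
  exact measurable_const.sub (measurable_const.mul (measurable_rankOneProj_apply i j))

lemma integral_Qmat {K : ℕ} [NeZero K] (ν : Measure ℂ) [IsProbabilityMeasure ν]
    [NullSingletonClass ν] (hν : MeasurePreserving Neg.neg ν ν) (μ : ℝ) :
    Matrix.of (fun i j => ∫ x, Qmat μ x i j ∂(Measure.pi fun _ => ν))
      = (((1 - μ / K : ℝ) : ℂ)) • (1 : Matrix (Fin K) (Fin K) ℂ) := by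
  ext i j
  have hP := congr_fun₂ (integral_rankOneProj ν hν) i j
  simp only [of_apply] at hP ⊢
  simp only [Qmat_eq_one_sub_smul_rankOneProj, Matrix.sub_apply, Matrix.smul_apply, smul_eq_mul]
  rw [integral_sub (integrable_const _) ((integrable_rankOneProj_apply _ i j).const_mul _),
    integral_const, integral_const_mul, hP]
  rcases eq_or_ne i j with rfl | hij
  · simp [div_eq_mul_inv]
  · simp [hij]

/-- For a standard complex Gaussian vector `h ∈ ℂ^K` (K ≥ 1), `μ ∈ ℝ`, and
`Q = I_K − (μ/‖h‖²) h hᴴ`, one has `E[Q] = ν I_K` with `ν = 1 − μ/K` (expectation entrywise). -/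
theorem expectation_Qmat {Ω : Type} [MeasureSpace Ω]
    [IsProbabilityMeasure (ℙ : Measure Ω)] {K : ℕ} (hK : 1 ≤ K) (μ : ℝ)
    (h : Ω → Fin K → ℂ) (hg : IsStdCGaussian h) :
    Matrix.of (fun i j => ∫ ω, Qmat μ (h ω) i j)
      = (((1 - μ / K : ℝ) : ℂ)) • (1 : Matrix (Fin K) (Fin K) ℂ) := by
  have : NeZero K := ⟨by omega⟩
  have hlaw (i j : Fin K) : ∫ ω, Qmat μ (h ω) i j
      = ∫ x, Qmat μ x i j ∂(Measure.pi fun _ => stdComplexGaussian) := by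
    rw [← hg.map_eq_pi,
      integral_map hg.meas.aemeasurable (measurable_Qmat_apply μ i j).aestronglyMeasurable]
  simp only [hlaw]
  exact integral_Qmat stdComplexGaussian measurePreserving_neg_stdComplexGaussian μ
end
end

section
/- Fix μ ∈ (0,2) and an integer c ≥ 1. For K ≥ 2 and M = cK, let SIR(K) = ( 1 − 2ν_K^{cK} + α_K^{cK}(1 − 1/K) + ε_K^{cK}(1/K) ) / ( (1 − 1/K)(ε_K^{cK} − α_K^{cK}) ), where ν_K = 1 − μ/K, α_K = 1 − 2μ/K + μ²/(K(K+1)), ε_K = 1 − 2μ/K + μ²/K. Then as K → ∞, SIR(K) converges to ( 1 − 2 e^{−μc} + e^{−2μc} ) / ( e^{−2μc} ( e^{μ²c} − 1 ) ). In particular ν_K^{cK} → e^{−μc}, α_K^{cK} → e^{−2μc}, and ε_K^{cK} → e^{−μ(2−μ)c}. -/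
/-!
Each of `ν_K, α_K, ε_K` has the form `1 + t_K / K` with `t_K` converging (to `-μ`, `-2μ` and
`μ² - 2μ`), so its `cK`-th power tends to `e^{c t}`. The SIR is a rational expression in these
powers and `1/K` whose limiting denominator is `e^{-μ(2-μ)c} - e^{-2μc} = e^{-2μc}(e^{μ²c} - 1)`,
nonzero because `μ ≠ 0` and `c ≠ 0`.
-/

open Filter Real Topology

theorem tendsto_pow_mul_exp_of_tendsto_mul_sub_one {f : ℕ → ℝ} {t : ℝ}
    (hf : Tendsto (fun n : ℕ => (n : ℝ) * (f n - 1)) atTop (𝓝 t)) (c : ℕ) :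
    Tendsto (fun n : ℕ => f n ^ (c * n)) atTop (𝓝 (exp (c * t))) := by
  have h := (tendsto_one_add_pow_exp_of_tendsto hf).pow c
  simp only [add_sub_cancel, ← pow_mul, ← exp_nat_mul] at h
  simpa only [mul_comm] using h

noncomputable section

def cdNu (μ K : ℝ) : ℝ := 1 - μ / K

def cdAlpha (μ K : ℝ) : ℝ := 1 - 2 * μ / K + μ ^ 2 / (K * (K + 1))

def cdEps (μ K : ℝ) : ℝ := 1 - 2 * μ / K + μ ^ 2 / K

/-- The SIR of the coordinate-descent equalizer, in terms of `a = ν_K^{cK}`, `b = α_K^{cK}` and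
`e = ε_K^{cK}`. -/
def cdSIR (a b e K : ℝ) : ℝ :=
  (1 - 2 * a + b * (1 - 1 / K) + e * (1 / K)) / ((1 - 1 / K) * (e - b))

end

theorem tendsto_cdNu_pow (μ : ℝ) (c : ℕ) :
    Tendsto (fun K : ℕ => cdNu μ K ^ (c * K)) atTop (𝓝 (exp (-(μ * c)))) := by
  have h : Tendsto (fun K : ℕ => (K : ℝ) * (cdNu μ K - 1)) atTop (𝓝 (-μ)) := by
    refine tendsto_const_nhds.congr' ?_
    filter_upwards [eventually_ne_atTop 0] with K hK
    simp only [cdNu]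
    field_simp
    ring
  convert tendsto_pow_mul_exp_of_tendsto_mul_sub_one h c using 3
  ring

theorem tendsto_cdAlpha_pow (μ : ℝ) (c : ℕ) :
    Tendsto (fun K : ℕ => cdAlpha μ K ^ (c * K)) atTop (𝓝 (exp (-(2 * μ * c)))) := by
  have h : Tendsto (fun K : ℕ => (K : ℝ) * (cdAlpha μ K - 1)) atTop (𝓝 (-(2 * μ))) := by
    have hlim := (tendsto_one_div_add_atTop_nhds_zero_nat.const_mul (μ ^ 2)).const_add (-(2 * μ))
    rw [mul_zero, add_zero] at hlim
    refine hlim.congr' ?_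
    filter_upwards [eventually_ne_atTop 0] with K hK
    simp only [cdAlpha]
    field_simp
    ring
  convert tendsto_pow_mul_exp_of_tendsto_mul_sub_one h c using 3
  ring

theorem tendsto_cdEps_pow (μ : ℝ) (c : ℕ) :
    Tendsto (fun K : ℕ => cdEps μ K ^ (c * K)) atTop (𝓝 (exp (-(μ * (2 - μ) * c)))) := by
  have h : Tendsto (fun K : ℕ => (K : ℝ) * (cdEps μ K - 1)) atTop (𝓝 (μ ^ 2 - 2 * μ)) := by
    refine tendsto_const_nhds.congr' ?_
    filter_upwards [eventually_ne_atTop 0] with K hK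
    simp only [cdEps]
    field_simp
    ring
  convert tendsto_pow_mul_exp_of_tendsto_mul_sub_one h c using 3
  ring

theorem tendsto_cdSIR {a b e : ℕ → ℝ} {a₀ b₀ e₀ : ℝ} (ha : Tendsto a atTop (𝓝 a₀))
    (hb : Tendsto b atTop (𝓝 b₀)) (he : Tendsto e atTop (𝓝 e₀)) (hne : e₀ ≠ b₀) :
    Tendsto (fun K : ℕ => cdSIR (a K) (b K) (e K) K) atTop
      (𝓝 ((1 - 2 * a₀ + b₀) / (e₀ - b₀))) := by
  have h0 : Tendsto (fun K : ℕ => 1 / (K : ℝ)) atTop (𝓝 0) := tendsto_one_div_atTop_nhds_zero_nat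
  have h1 : Tendsto (fun K : ℕ => 1 - 1 / (K : ℝ)) atTop (𝓝 1) := by
    simpa using h0.const_sub 1
  have hnum := (((tendsto_const_nhds (x := (1 : ℝ))).sub (ha.const_mul 2)).add
    (hb.mul h1)).add (he.mul h0)
  have hden := h1.mul (he.sub hb)
  have hsir := hnum.div hden (by simpa using sub_ne_zero.mpr hne)
  simp only [mul_one, mul_zero, add_zero, one_mul] at hsir
  exact hsir

theorem exp_neg_mul_two_sub_sub_exp (μ c : ℝ) :
    exp (-(μ * (2 - μ) * c)) - exp (-(2 * μ * c)) = exp (-(2 * μ * c)) * (exp (μ ^ 2 * c) - 1) := by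
  rw [show -(μ * (2 - μ) * c) = -(2 * μ * c) + μ ^ 2 * c by ring, exp_add]
  ring

/-- Fix `μ ∈ (0,2)` and an integer `c ≥ 1`. For `K ≥ 2` and `M = cK`, let
`SIR(K)` be the closed-form coordinate-descent SIR with constants `ν_K = 1 − μ/K`,
`α_K = 1 − 2μ/K + μ²/(K(K+1))`, `ε_K = 1 − 2μ/K + μ²/K`. Then as `K → ∞`,
`ν_K^{cK} → e^{−μc}`, `α_K^{cK} → e^{−2μc}`, `ε_K^{cK} → e^{−μ(2−μ)c}`, and
`SIR(K) → (1 − 2e^{−μc} + e^{−2μc}) / (e^{−2μc}(e^{μ²c} − 1))`. -/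
theorem sir_large_system_limit (μ : ℝ) (hμ : μ ∈ Set.Ioo (0 : ℝ) 2) (c : ℕ) (hc : 1 ≤ c) :
    Tendsto (fun K : ℕ => (1 - μ / K) ^ (c * K)) atTop (nhds (Real.exp (-(μ * c)))) ∧
    Tendsto (fun K : ℕ => (1 - 2 * μ / K + μ ^ 2 / (K * (K + 1))) ^ (c * K)) atTop
      (nhds (Real.exp (-(2 * μ * c)))) ∧
    Tendsto (fun K : ℕ => (1 - 2 * μ / K + μ ^ 2 / K) ^ (c * K)) atTop
      (nhds (Real.exp (-(μ * (2 - μ) * c)))) ∧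
    Tendsto (fun K : ℕ =>
        (1 - 2 * (1 - μ / K) ^ (c * K)
          + (1 - 2 * μ / K + μ ^ 2 / (K * (K + 1))) ^ (c * K) * (1 - 1 / (K : ℝ))
          + (1 - 2 * μ / K + μ ^ 2 / K) ^ (c * K) * (1 / (K : ℝ))) /
        ((1 - 1 / (K : ℝ)) *
          ((1 - 2 * μ / K + μ ^ 2 / K) ^ (c * K)
            - (1 - 2 * μ / K + μ ^ 2 / (K * (K + 1))) ^ (c * K))))
      atTop
      (nhds ((1 - 2 * Real.exp (-(μ * c)) + Real.exp (-(2 * μ * c))) /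
        (Real.exp (-(2 * μ * c)) * (Real.exp (μ ^ 2 * c) - 1)))) := by
  have hν := tendsto_cdNu_pow μ c
  have hα := tendsto_cdAlpha_pow μ c
  have hε := tendsto_cdEps_pow μ c
  have hgap : exp (-(μ * (2 - μ) * c)) - exp (-(2 * μ * c)) ≠ 0 := by
    rw [exp_neg_mul_two_sub_sub_exp]
    have hpos : (0 : ℝ) < μ ^ 2 * c := by have := hμ.1; positivity
    exact mul_ne_zero (exp_pos _).ne' (sub_ne_zero.mpr (one_lt_exp_iff.mpr hpos).ne')
  refine ⟨hν, hα, hε, ?_⟩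
  have hsir := tendsto_cdSIR hν hα hε (sub_ne_zero.mp hgap)
  rwa [exp_neg_mul_two_sub_sub_exp] at hsir
end
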